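/- arXiv:2002.01957 — 2 statements merged into one kernel-verified Lean document; each statement's English description precedes it below -/
import Mathlib

section
/- For any two finite simple graphs G and H, the lexicographic product G[H] is k-indicated colorable for every integer k ≥ col(G)·col(H). -/
open SimpleGraph
open scoped Classical

/-- The lexicographic product `G[H]`. -/
def lexProd {α β : Type*} (G : SimpleGraph α) (H : SimpleGraph β) :
    SimpleGraph (α × β) where
  Adj x y := G.Adj x.1 y.1 ∨ (x.1 = y.1 ∧ H.Adj x.2 y.2)
  symm := by
    constructor
    rintro x y (h | ⟨h1, h2⟩)
    · exact Or.inl h.symm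
    · exact Or.inr ⟨h1.symm, h2.symm⟩
  loopless := by
    constructor
    rintro x (h | ⟨-, h2⟩)
    · exact G.loopless.irrefl _ h
    · exact H.loopless.irrefl _ h2

/-- `AnnWins G k c`: starting from the partial proper coloring `c`, Ann (who presents
uncolored vertices one at a time) has a strategy so that Ben (who properly colors each
presented vertex with one of `k` colors) can always move, and the whole graph gets colored. -/
inductive AnnWins {V : Type*} (G : SimpleGraph V) (k : ℕ) :
    (V → Option (Fin k)) → Prop
  | done (c : V → Option (Fin k)) (h : ∀ v, (c v).isSome) : AnnWins G k c
  | step (c : V → Option (Fin k)) (v : V) (hv : c v = none)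
      (hex : ∃ col : Fin k, ∀ u, G.Adj u v → c u ≠ some col)
      (h : ∀ col : Fin k, (∀ u, G.Adj u v → c u ≠ some col) →
        AnnWins G k (Function.update c v (some col))) : AnnWins G k c

/-- A graph is `k`-indicated colorable if Ann wins the indicated coloring game
with `k` colors starting from the empty coloring. -/
def IndicatedColorable {V : Type*} (G : SimpleGraph V) (k : ℕ) : Prop :=
  AnnWins G k (fun _ => none)

/-- The indicated chromatic number `χᵢ(G)`. -/
noncomputable def indicatedChromaticNumber {V : Type*} (G : SimpleGraph V) : ℕ :=
  sInf {k | IndicatedColorable G k}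

/-- The coloring number `col(G)`: the least `d` such that every nonempty set `S` of
vertices contains a vertex with fewer than `d` neighbours in `S`. -/
noncomputable def coloringNumber {V : Type*} (G : SimpleGraph V) : ℕ :=
  sInf {d : ℕ | ∀ S : Set V, S.Nonempty → ∃ v ∈ S, {u ∈ S | G.Adj v u}.ncard < d}

/-- `F`-freeness: no induced subgraph of `G` is isomorphic to `F`. -/
def IsFreeOf {α β : Type*} (F : SimpleGraph α) (G : SimpleGraph β) : Prop :=
  IsEmpty (F ↪g G)

/-- The complete expansion of `G`, replacing each vertex `v` by a clique on `m v` vertices. -/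
def completeExpansion {V : Type*} (G : SimpleGraph V) (m : V → ℕ) :
    SimpleGraph (Σ v, Fin (m v)) where
  Adj x y := G.Adj x.1 y.1 ∨ (x.1 = y.1 ∧ x ≠ y)
  symm := by
    constructor
    rintro x y (h | ⟨h1, h2⟩)
    · exact Or.inl h.symm
    · exact Or.inr ⟨h1.symm, h2.symm⟩
  loopless := by
    constructor
    rintro x (h | ⟨-, h2⟩)
    · exact G.loopless.irrefl _ h
    · exact h2 rfl

/-- The independent expansion of `G`, replacing each vertex `v` by an independent
set of `m v` vertices. -/
def independentExpansion {V : Type*} (G : SimpleGraph V) (m : V → ℕ) :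
    SimpleGraph (Σ v, Fin (m v)) where
  Adj x y := G.Adj x.1 y.1
  symm := ⟨fun _ _ h => h.symm⟩
  loopless := ⟨fun _ h => G.loopless.irrefl _ h⟩

/-!
Order the vertices of `G` and of `H` so that every vertex has fewer than `a = col(G)`,
resp. `b = col(H)`, neighbors at or below its own level. Ann colors each fiber
`{x} × V(H)` bottom-up in the order of `H`, in two phases. While some fiber is unsettled
(neither full nor carrying `b` colors) she plays in the lowest unsettled fiber `x₀`: no
fiber above `x₀` has been touched yet and every fiber carries at most `b` colors, so at
most `(a - 1) b` colors come from the lower `G`-neighbors of `x₀` and fewer than `b` from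
the fiber itself, leaving a free color since `a b ≤ k`. Once every fiber is settled, a
fiber `x₀` that is not full carries at least `b` colors, fewer than `b` of which occur on
the lower `H`-neighbors of the presented vertex; any other color of the fiber is free,
because the colors of `G`-adjacent fibers are disjoint.
-/

open Finset

section

variable {V : Type*} {k : ℕ}

def usedColors (c : V → Option (Fin k)) (s : Finset V) : Finset (Fin k) :=
  s.biUnion fun u => (c u).toFinset

lemma mem_usedColors {c : V → Option (Fin k)} {s : Finset V} {γ : Fin k} :
    γ ∈ usedColors c s ↔ ∃ u ∈ s, c u = some γ := by
  simp [usedColors]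

lemma card_usedColors_le (c : V → Option (Fin k)) (s : Finset V) :
    #(usedColors c s) ≤ #s := by
  refine (card_biUnion_le_card_mul s _ 1 fun u _ => ?_).trans_eq (mul_one _)
  cases c u <;> simp

lemma card_filter_eq_none_update_lt [Fintype V] [DecidableEq V] {c : V → Option (Fin k)}
    {v : V} (hv : c v = none) (col : Fin k) :
    #{u | Function.update c v (some col) u = none} < #{u | c u = none} := by
  refine card_lt_card ⟨fun u hu => ?_, fun h => ?_⟩
  · simp only [mem_filter, mem_univ, true_and, Function.update_apply] at hu ⊢
    split_ifs at hu
    exact hu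
  · simpa using h (mem_filter.2 ⟨mem_univ _, hv⟩)

theorem annWins_of_invariant [Fintype V] [DecidableEq V] {G : SimpleGraph V}
    (P : (V → Option (Fin k)) → Prop)
    (hmove : ∀ c, P c → ∀ v₀, c v₀ = none → ∃ v, c v = none ∧
      (∃ col, ∀ u, G.Adj u v → c u ≠ some col) ∧
      ∀ col, (∀ u, G.Adj u v → c u ≠ some col) → P (Function.update c v (some col)))
    (c : V → Option (Fin k)) (hc : P c) : AnnWins G k c := by
  by_cases hdone : ∀ v, (c v).isSome
  · exact .done c hdone
  push Not at hdone
  obtain ⟨v₀, hv₀⟩ := hdone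
  obtain ⟨v, hv, hlegal, hP⟩ := hmove c hc v₀ (by simpa using hv₀)
  refine .step c v hv hlegal fun col hcol => ?_
  convert annWins_of_invariant P hmove _ (hP col hcol)
termination_by #{v | c v = none}
decreasing_by exact card_filter_eq_none_update_lt hv col

noncomputable def lowerNeighbors [Fintype V] (G : SimpleGraph V) (σ : V → ℕ) (v : V) : Finset V :=
  {u | G.Adj v u ∧ σ u ≤ σ v}

lemma exists_card_lowerNeighbors_lt [Fintype V] (G : SimpleGraph V) {d : ℕ}
    (hd : ∀ S : Finset V, S.Nonempty → ∃ v ∈ S, #{u ∈ S | G.Adj v u} < d) :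
    ∃ σ : V → ℕ, ∀ v, #(lowerNeighbors G σ v) < d := by
  suffices h : ∀ S : Finset V, ∃ σ : V → ℕ, ∀ v ∈ S, #{u ∈ S | G.Adj v u ∧ σ u ≤ σ v} < d by
    obtain ⟨σ, hσ⟩ := h univ
    exact ⟨σ, fun v => hσ v (mem_univ v)⟩
  intro S
  induction S using Finset.strongInduction with
  | H S ih =>
  rcases S.eq_empty_or_nonempty with rfl | hS
  · exact ⟨0, by simp⟩
  obtain ⟨v, hvS, hv⟩ := hd S hS
  obtain ⟨σ, hσ⟩ := ih (S.erase v) (erase_ssubset hvS)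
  -- `v` has few neighbors in `S`, so it can go above all of `S.erase v`
  set top := (S.erase v).sup σ + 1
  have hlt : ∀ u ∈ S.erase v, σ u < top := fun u hu => Nat.lt_succ_of_le (le_sup hu)
  refine ⟨Function.update σ v top, fun w hw => ?_⟩
  rcases eq_or_ne w v with rfl | hwv
  · exact (card_le_card (monotone_filter_right _ fun _ _ hu => hu.1)).trans_lt hv
  · have hwS : w ∈ S.erase v := mem_erase.2 ⟨hwv, hw⟩
    convert hσ w hwS using 2
    ext u
    simp only [mem_filter, mem_erase, Function.update_apply, if_neg hwv]
    split_ifs with huv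
    · subst huv
      simp only [ne_eq, not_true_eq_false, false_and, iff_false, not_and, not_le]
      exact fun _ _ => hlt w hwS
    · simp [huv]

lemma exists_card_lowerNeighbors_lt_coloringNumber [Fintype V] (G : SimpleGraph V) :
    ∃ σ : V → ℕ, ∀ v, #(lowerNeighbors G σ v) < coloringNumber G := by
  have hmem : coloringNumber G ∈
      {d : ℕ | ∀ S : Set V, S.Nonempty → ∃ v ∈ S, {u ∈ S | G.Adj v u}.ncard < d} := by
    refine Nat.sInf_mem ⟨Fintype.card V + 1, fun S ⟨v, hv⟩ => ⟨v, hv, ?_⟩⟩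
    exact Nat.lt_succ_of_le ((Set.ncard_le_ncard (Set.subset_univ _)).trans (by simp))
  refine exists_card_lowerNeighbors_lt G fun S hS => ?_
  obtain ⟨v, hv, hlt⟩ := hmem S (by simpa using hS)
  exact ⟨v, hv, by rwa [← Set.ncard_coe_finset, coe_filter]⟩

section LexProd

variable {α β : Type*} [Fintype β]

def palette (c : α × β → Option (Fin k)) (x : α) : Finset (Fin k) :=
  usedColors (fun y => c (x, y)) univ

lemma mem_palette {c : α × β → Option (Fin k)} {x : α} {γ : Fin k} :
    γ ∈ palette c x ↔ ∃ y, c (x, y) = some γ := by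
  simp [palette, mem_usedColors]

def FiberSettled (b : ℕ) (c : α × β → Option (Fin k)) (x : α) : Prop :=
  (∀ y, (c (x, y)).isSome) ∨ b ≤ #(palette c x)

variable {b : ℕ} {c : α × β → Option (Fin k)} {x x₀ : α} {y₀ : β} {col : Fin k}

lemma palette_update_of_ne (hx : x ≠ x₀) (a : Option (Fin k)) :
    palette (Function.update c (x₀, y₀) a) x = palette c x := by
  ext γ
  simp [mem_palette, hx]

lemma palette_update_subset :
    palette (Function.update c (x₀, y₀) (some col)) x₀ ⊆ insert col (palette c x₀) := by
  intro γ
  simp only [mem_palette, mem_insert, Function.update_apply]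
  rintro ⟨y, hy⟩
  split_ifs at hy
  · exact .inl (Option.some_injective _ hy).symm
  · exact .inr ⟨y, hy⟩

lemma palette_subset_palette_update {v : α × β} (hv : c v = none) :
    palette c x ⊆ palette (Function.update c v (some col)) x := by
  intro γ
  simp only [mem_palette]
  rintro ⟨y, hy⟩
  refine ⟨y, ?_⟩
  rwa [Function.update_of_ne (by rintro rfl; simp [hv] at hy)]

lemma FiberSettled.update {v : α × β} (hv : c v = none) (h : FiberSettled b c x) :
    FiberSettled b (Function.update c v (some col)) x := by
  refine h.imp (fun hfull y => ?_) (fun hb => hb.trans (card_le_card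
    (palette_subset_palette_update hv)))
  rw [Function.update_apply]
  split_ifs
  exacts [rfl, hfull y]

/-- The two disjuncts of `settled_or_card_palette_le` are the two phases of Ann's strategy. -/
structure LexInvariant (G : SimpleGraph α) (σ : α → ℕ) (τ : β → ℕ) (b : ℕ)
    (c : α × β → Option (Fin k)) : Prop where
  disjoint_palette : ∀ ⦃x x'⦄, G.Adj x x' → Disjoint (palette c x) (palette c x')
  isSome_of_lt : ∀ x ⦃y y'⦄, τ y < τ y' → (c (x, y')).isSome → (c (x, y)).isSome
  settled_of_lt : ∀ ⦃x x'⦄, σ x < σ x' → (∃ y, (c (x', y)).isSome) → FiberSettled b c x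
  settled_or_card_palette_le : (∀ x, FiberSettled b c x) ∨ ∀ x, #(palette c x) ≤ b

lemma palette_none : palette (fun _ : α × β => (none : Option (Fin k))) x = ∅ := by
  ext
  simp [mem_palette]

variable {G : SimpleGraph α} {H : SimpleGraph β} {σ : α → ℕ} {τ : β → ℕ}

lemma lexInvariant_none : LexInvariant G σ τ b (fun _ : α × β => (none : Option (Fin k))) where
  disjoint_palette _ _ _ := by simp [palette_none]
  isSome_of_lt _ _ _ _ h := by simp at h
  settled_of_lt _ _ _ h := by simp at h
  settled_or_card_palette_le := .inr fun _ => by simp [palette_none]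

lemma disjoint_palette_update
    (hdisj : ∀ ⦃x x'⦄, G.Adj x x' → Disjoint (palette c x) (palette c x'))
    (hcol : ∀ u, (lexProd G H).Adj u (x₀, y₀) → c u ≠ some col) ⦃x x' : α⦄ (hxx' : G.Adj x x') :
    Disjoint (palette (Function.update c (x₀, y₀) (some col)) x)
      (palette (Function.update c (x₀, y₀) (some col)) x') := by
  have key : ∀ x, G.Adj x₀ x → Disjoint (palette (Function.update c (x₀, y₀) (some col)) x₀)
      (palette (Function.update c (x₀, y₀) (some col)) x) := fun x hx => by
    rw [palette_update_of_ne hx.ne']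
    refine disjoint_of_subset_left palette_update_subset
      (disjoint_insert_left.2 ⟨fun h => ?_, hdisj hx⟩)
    obtain ⟨y, hy⟩ := mem_palette.1 h
    exact hcol (x, y) (.inl hx.symm) hy
  rcases eq_or_ne x x₀ with rfl | hx
  · exact key _ hxx'
  rcases eq_or_ne x' x₀ with rfl | hx'
  · exact (key _ hxx'.symm).symm
  rw [palette_update_of_ne hx, palette_update_of_ne hx']
  exact hdisj hxx'

namespace LexInvariant

variable (hI : LexInvariant G σ τ b c)
include hI

lemma mem_usedColors_lowerNeighbors {y : β} {γ : Fin k} (hv : c (x₀, y₀) = none)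
    (hy : H.Adj y₀ y) (hc : c (x₀, y) = some γ) :
    γ ∈ usedColors (fun y => c (x₀, y)) (lowerNeighbors H τ y₀) := by
  refine mem_usedColors.2 ⟨y, ?_, hc⟩
  simp only [lowerNeighbors, mem_filter, mem_univ, true_and]
  refine ⟨hy, not_lt.1 fun hlt => ?_⟩
  simpa [hv] using hI.isSome_of_lt x₀ hlt (by simp [hc])

lemma exists_free_color_of_le_card_palette (hτ : ∀ y, #(lowerNeighbors H τ y) < b)
    (hv : c (x₀, y₀) = none) (hb : b ≤ #(palette c x₀)) :
    ∃ col, ∀ u, (lexProd G H).Adj u (x₀, y₀) → c u ≠ some col := by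
  have hcard : #(usedColors (fun y => c (x₀, y)) (lowerNeighbors H τ y₀)) < #(palette c x₀) :=
    (card_usedColors_le _ _).trans_lt ((hτ y₀).trans_le hb)
  obtain ⟨γ, hγ, hγH⟩ := exists_mem_notMem_of_card_lt_card hcard
  refine ⟨γ, fun ⟨x, y⟩ hadj hc => ?_⟩
  rcases hadj with hG | ⟨rfl, hH⟩
  · exact disjoint_left.1 (hI.disjoint_palette hG) (mem_palette.2 ⟨y, hc⟩) hγ
  · exact hγH (hI.mem_usedColors_lowerNeighbors hv hH.symm hc)

lemma update (hv : c (x₀, y₀) = none) (hmin : ∀ y, c (x₀, y) = none → τ y₀ ≤ τ y)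
    (hprev : ∀ x, σ x < σ x₀ → FiberSettled b c x)
    (hphase : ¬FiberSettled b c x₀ ∨ ∀ x, FiberSettled b c x)
    (hcol : ∀ u, (lexProd G H).Adj u (x₀, y₀) → c u ≠ some col) :
    LexInvariant G σ τ b (Function.update c (x₀, y₀) (some col)) where
  disjoint_palette := disjoint_palette_update hI.disjoint_palette hcol
  isSome_of_lt x y y' hlt hsome := by
    rcases eq_or_ne (x, y) (x₀, y₀) with h | h
    · rw [h, Function.update_self]
      rfl
    rw [Function.update_of_ne h]
    rcases eq_or_ne (x, y') (x₀, y₀) with h' | h'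
    · obtain ⟨rfl, rfl⟩ := Prod.mk.inj h'
      by_contra hy
      exact hlt.not_ge (hmin y (by simpa using hy))
    · rw [Function.update_of_ne h'] at hsome
      exact hI.isSome_of_lt x hlt hsome
  settled_of_lt x x' hlt htouch := by
    refine FiberSettled.update hv ?_
    rcases eq_or_ne x' x₀ with rfl | hx'
    · exact hprev x hlt
    · obtain ⟨y, hy⟩ := htouch
      exact hI.settled_of_lt hlt ⟨y, by rwa [Function.update_of_ne (by simp [hx'])] at hy⟩
  settled_or_card_palette_le := by
    rcases hI.settled_or_card_palette_le with hall | hle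
    · exact .inl fun x => (hall x).update hv
    rcases hphase with hx₀ | hall
    · refine .inr fun x => ?_
      rcases eq_or_ne x x₀ with rfl | hx
      · have : #(palette c x) < b := not_le.1 fun hb => hx₀ (.inr hb)
        exact (card_le_card palette_update_subset).trans ((card_insert_le _ _).trans this)
      · rw [palette_update_of_ne hx]
        exact hle x
    · exact .inl fun x => (hall x).update hv

variable [Fintype α]

lemma exists_free_color_of_not_fiberSettled {a : ℕ} (hσ : ∀ x, #(lowerNeighbors G σ x) < a)
    (hτ : ∀ y, #(lowerNeighbors H τ y) < b) (hk : a * b ≤ k) (hv : c (x₀, y₀) = none)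
    (hx₀ : ¬FiberSettled b c x₀) :
    ∃ col, ∀ u, (lexProd G H).Adj u (x₀, y₀) → c u ≠ some col := by
  have hpal : ∀ x, #(palette c x) ≤ b :=
    hI.settled_or_card_palette_le.resolve_left fun h => hx₀ (h x₀)
  set F := (lowerNeighbors G σ x₀).biUnion (palette c) ∪
    usedColors (fun y => c (x₀, y)) (lowerNeighbors H τ y₀)
  have hF : #F < #(univ : Finset (Fin k)) := calc
    #F ≤ #(lowerNeighbors G σ x₀) * b + #(lowerNeighbors H τ y₀) :=
      (card_union_le _ _).trans (add_le_add
        (card_biUnion_le_card_mul _ _ _ fun x _ => hpal x) (card_usedColors_le _ _))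
    _ < #(lowerNeighbors G σ x₀) * b + b := Nat.add_lt_add_left (hτ y₀) _
    _ = (#(lowerNeighbors G σ x₀) + 1) * b := (add_one_mul _ _).symm
    _ ≤ a * b := Nat.mul_le_mul_right _ (hσ x₀)
    _ ≤ #(univ : Finset (Fin k)) := by simpa using hk
  obtain ⟨γ, -, hγF⟩ := exists_mem_notMem_of_card_lt_card hF
  refine ⟨γ, fun ⟨x, y⟩ hadj hc => hγF ?_⟩
  rcases hadj with hG | ⟨rfl, hH⟩
  · -- a colored fiber above `x₀` would force `x₀` to be settled
    have hx : σ x ≤ σ x₀ := not_lt.1 fun hlt => hx₀ (hI.settled_of_lt hlt ⟨y, by simp [hc]⟩)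
    refine mem_union_left _ (mem_biUnion.2 ⟨x, ?_, mem_palette.2 ⟨y, hc⟩⟩)
    simpa [lowerNeighbors] using ⟨hG.symm, hx⟩
  · exact mem_union_right _ (hI.mem_usedColors_lowerNeighbors hv hH.symm hc)

lemma exists_move {a : ℕ} (hσ : ∀ x, #(lowerNeighbors G σ x) < a)
    (hτ : ∀ y, #(lowerNeighbors H τ y) < b) (hk : a * b ≤ k) (v₀ : α × β) (hv₀ : c v₀ = none) :
    ∃ v, c v = none ∧ (∃ col, ∀ u, (lexProd G H).Adj u v → c u ≠ some col) ∧
      ∀ col, (∀ u, (lexProd G H).Adj u v → c u ≠ some col) →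
        LexInvariant G σ τ b (Function.update c v (some col)) := by
  suffices h : ∃ x₀, (∃ y, c (x₀, y) = none) ∧ (∀ x, σ x < σ x₀ → FiberSettled b c x) ∧
      (¬FiberSettled b c x₀ ∨ ∀ x, FiberSettled b c x) by
    obtain ⟨x₀, hne, hprev, hphase⟩ := h
    obtain ⟨y₀, hy₀, hmin⟩ := Set.exists_min_image {y | c (x₀, y) = none} τ (Set.toFinite _) hne
    change c (x₀, y₀) = none at hy₀
    refine ⟨(x₀, y₀), hy₀, ?_, fun col hcol => hI.update hy₀ hmin hprev hphase hcol⟩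
    rcases hphase with hx₀ | hall
    · exact hI.exists_free_color_of_not_fiberSettled hσ hτ hk hy₀ hx₀
    · refine hI.exists_free_color_of_le_card_palette hτ hy₀ ((hall x₀).resolve_left fun h => ?_)
      simpa [hy₀] using h y₀
  by_cases hall : ∀ x, FiberSettled b c x
  · exact ⟨v₀.1, ⟨v₀.2, hv₀⟩, fun x _ => hall x, .inr hall⟩
  push Not at hall
  obtain ⟨x₀, hx₀, hmin⟩ :=
    Set.exists_min_image {x | ¬FiberSettled b c x} σ (Set.toFinite _) hall
  refine ⟨x₀, ?_, fun x hx => not_not.1 fun h => (hmin x h).not_gt hx, .inl hx₀⟩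
  by_contra! hfull
  exact hx₀ (.inl fun y => Option.isSome_iff_ne_none.2 (hfull y))

end LexInvariant

end LexProd

end

/-- For any finite graphs `G` and `H`, the lexicographic product `G[H]` is
`k`-indicated colorable for every `k ≥ col(G)·col(H)`. -/
theorem lexProd_indicatedColorable_of_colNum_mul_colNum_le
    {α β : Type*} [Fintype α] [Fintype β] (G : SimpleGraph α) (H : SimpleGraph β)
    (k : ℕ) (hk : coloringNumber G * coloringNumber H ≤ k) :
    IndicatedColorable (lexProd G H) k := by
  obtain ⟨σ, hσ⟩ := exists_card_lowerNeighbors_lt_coloringNumber G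
  obtain ⟨τ, hτ⟩ := exists_card_lowerNeighbors_lt_coloringNumber H
  exact annWins_of_invariant (LexInvariant G σ τ (coloringNumber H))
    (fun c hc => hc.exists_move hσ hτ hk) _ lexInvariant_none
end

section
/- Let ℓ ≥ 4 and let G be a finite simple graph with no induced subgraph isomorphic to the cycle C_ℓ. Then every complete expansion 𝕂[G] of G (with arbitrary positive clique sizes m_v) has no induced subgraph isomorphic to C_ℓ. -/
open SimpleGraph
open scoped Classical

/-! Two vertices of one clique of `𝕂[G]` have the same closed neighbourhood, while adjacent
vertices of `C_ℓ` never do once `ℓ ≥ 4`. So an induced `C_ℓ` in `𝕂[G]` meets each clique at most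
once, and projecting it to `G` gives an induced `C_ℓ` in `G`. -/

section CompleteExpansion

variable {V α : Type*} {G : SimpleGraph V} {m : V → ℕ} {F : SimpleGraph α}

theorem completeExpansion_adj_of_fst_eq {x y z : Σ v, Fin (m v)} (hxy : x.1 = y.1) (hzy : z ≠ y)
    (h : (completeExpansion G m).Adj z x) : (completeExpansion G m).Adj z y := by
  rcases h with h | ⟨h, -⟩
  · exact Or.inl (hxy ▸ h)
  · exact Or.inr ⟨h.trans hxy, hzy⟩

theorem injective_fst_of_forall_adj_exists_adj_not_adj (f : F ↪g completeExpansion G m)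
    (hF : ∀ u v, F.Adj u v → ∃ w ≠ v, F.Adj w u ∧ ¬ F.Adj w v) :
    Function.Injective fun a => (f a).1 := by
  intro u v huv
  by_contra hne
  have hadj : F.Adj u v := f.map_rel_iff.mp (Or.inr ⟨huv, f.injective.ne hne⟩)
  obtain ⟨w, hwv, hwu, hnwv⟩ := hF u v hadj
  exact hnwv <| f.map_rel_iff.mp <|
    completeExpansion_adj_of_fst_eq huv (f.injective.ne hwv) (f.map_rel_iff.mpr hwu)

def embeddingOfFstInjective (f : F ↪g completeExpansion G m)
    (hf : Function.Injective fun a => (f a).1) : F ↪g G where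
  toFun a := (f a).1
  inj' := hf
  map_rel_iff' {a b} := by
    refine ⟨fun h => f.map_rel_iff.mp (Or.inl h), fun h => ?_⟩
    rcases f.map_rel_iff.mpr h with h' | ⟨heq, -⟩
    · exact h'
    · exact absurd (hf heq) (F.ne_of_adj h)

end CompleteExpansion

open Fin.CommRing in
theorem cycleGraph_exists_adj_not_adj {n : ℕ} {u v : Fin (n + 4)}
    (h : (cycleGraph (n + 4)).Adj u v) :
    ∃ w ≠ v, (cycleGraph (n + 4)).Adj w u ∧ ¬ (cycleGraph (n + 4)).Adj w v := by
  have two : (2 : Fin (n + 4)) ≠ 0 := by simp [Fin.ext_iff, Nat.mod_eq_of_lt]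
  have three : (3 : Fin (n + 4)) ≠ 0 := by simp [Fin.ext_iff, Nat.mod_eq_of_lt]
  have two_ne_one : (2 : Fin (n + 4)) ≠ 1 := by simp [Fin.ext_iff, Nat.mod_eq_of_lt]
  simp only [cycleGraph_adj] at h ⊢
  rcases h with h | h
  · refine ⟨u + 1, fun hw => two ?_, Or.inl (by ring), ?_⟩
    · linear_combination hw - h
    · rintro (hw | hw)
      · exact two_ne_one (by linear_combination hw - h)
      · exact three (by linear_combination -hw - h)
  · refine ⟨u - 1, fun hw => two ?_, Or.inr (by ring), ?_⟩
    · linear_combination -hw - h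
    · rintro (hw | hw)
      · exact three (by linear_combination -hw - h)
      · exact two_ne_one (by linear_combination hw - h)

theorem completeExpansion_cycleFree_general {V : Type*} (ℓ : ℕ) (hℓ : 4 ≤ ℓ)
    (G : SimpleGraph V) (hG : IsFreeOf (cycleGraph ℓ) G)
    (m : V → ℕ) :
    IsFreeOf (cycleGraph ℓ) (completeExpansion G m) := by
  obtain ⟨n, rfl⟩ : ∃ n, ℓ = n + 4 := ⟨ℓ - 4, by omega⟩
  refine ⟨fun f => hG.elim' (embeddingOfFstInjective f ?_)⟩
  exact injective_fst_of_forall_adj_exists_adj_not_adj f fun _ _ => cycleGraph_exists_adj_not_adj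

/-- If `ℓ ≥ 4` and `G` is `C_ℓ`-free, then every complete expansion of `G` is `C_ℓ`-free. -/
theorem completeExpansion_cycleFree {V : Type*} [Fintype V] (ℓ : ℕ) (hℓ : 4 ≤ ℓ)
    (G : SimpleGraph V) (hG : IsFreeOf (cycleGraph ℓ) G)
    (m : V → ℕ) (hm : ∀ v, 0 < m v) :
    IsFreeOf (cycleGraph ℓ) (completeExpansion G m) :=
  completeExpansion_cycleFree_general ℓ hℓ G hG m
end
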